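/- Let C be closed and convex, u ∈ C, v ∈ ℝⁿ, 0 ≤ γ < 1/2, and ζ = 1 − 2γ. Then every w ∈ C satisfying ⟨D(v − w), y − w⟩ ≤ γ‖w − u‖_D² for all y ∈ C also satisfies ‖w − v‖_D² ≤ ζ‖P_C^D(v) − v‖_D² + (1 − ζ)‖u − v‖_D²; that is, ℛ_{C,γ}^D(u,v) ⊆ 𝒫_{C,ζ}^D(u,v). -/
import Mathlib

open RealInnerProductSpace

abbrev EucSp (n : ℕ) := EuclideanSpace ℝ (Fin n)

noncomputable def dipr {n : ℕ} (D : Matrix (Fin n) (Fin n) ℝ) (x y : EucSp n) : ℝ :=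
  ⟪(Matrix.toEuclideanLin D) x, y⟫

noncomputable def dnorm {n : ℕ} (D : Matrix (Fin n) (Fin n) ℝ) (x : EucSp n) : ℝ :=
  Real.sqrt (dipr D x x)

/-- `p` is the exact projection of `v` onto `C` in the `D`-norm. -/
def IsDProj {n : ℕ} (D : Matrix (Fin n) (Fin n) ℝ) (C : Set (EucSp n)) (v p : EucSp n) : Prop :=
  p ∈ C ∧ ∀ z ∈ C, dnorm D (p - v) ≤ dnorm D (z - v)

lemma dipr_nonneg {n : ℕ} {D : Matrix (Fin n) (Fin n) ℝ} (hD : D.PosDef) (x : EucSp n) :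
    0 ≤ dipr D x x := by
  have h := hD.posSemidef.re_dotProduct_nonneg (x := (x : Fin n → ℝ))
  simpa [dipr, Matrix.toEuclideanLin, PiLp.inner_apply, dotProduct, Matrix.mulVec,
    mul_comm] using h

lemma dnorm_sq {n : ℕ} {D : Matrix (Fin n) (Fin n) ℝ} (hD : D.PosDef) (x : EucSp n) :
    dnorm D x ^ 2 = dipr D x x := Real.sq_sqrt (dipr_nonneg hD x)

lemma dipr_comm {n : ℕ} {D : Matrix (Fin n) (Fin n) ℝ} (hD : D.PosDef) (x y : EucSp n) :
    dipr D x y = dipr D y x := by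
  have hsym := (Matrix.isHermitian_iff_isSymmetric).mp hD.isHermitian
  have := hsym x y
  simp only [dipr]
  rw [this, real_inner_comm]

lemma dipr_sub_left {n : ℕ} (D : Matrix (Fin n) (Fin n) ℝ) (x y z : EucSp n) :
    dipr D (x - y) z = dipr D x z - dipr D y z := by
  simp [dipr, map_sub, inner_sub_left]

lemma dipr_sub_right {n : ℕ} (D : Matrix (Fin n) (Fin n) ℝ) (x y z : EucSp n) :
    dipr D x (y - z) = dipr D x y - dipr D x z := by
  simp [dipr, inner_sub_right]

theorem stmt7 {n : ℕ} (C : Set (EucSp n)) (hcl : IsClosed C) (hconv : Convex ℝ C)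
    (D : Matrix (Fin n) (Fin n) ℝ) (hD : D.PosDef)
    (u : EucSp n) (hu : u ∈ C) (v : EucSp n) (γ ζ : ℝ)
    (hγ : 0 ≤ γ ∧ γ < 1 / 2) (hζ : ζ = 1 - 2 * γ)
    (p : EucSp n) (hp : IsDProj D C v p)
    (w : EucSp n) (hwC : w ∈ C)
    (hw : ∀ y ∈ C, dipr D (v - w) (y - w) ≤ γ * (dnorm D (w - u)) ^ 2) :
    (dnorm D (w - v)) ^ 2 ≤
      ζ * (dnorm D (p - v)) ^ 2 + (1 - ζ) * (dnorm D (u - v)) ^ 2 := by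
  obtain ⟨hγ0, hγ1⟩ := hγ
  have hwu := hw u hu
  have hwp := hw p hp.1
  rw [dnorm_sq hD] at hwu hwp ⊢
  rw [dnorm_sq hD, dnorm_sq hD]
  -- expand everything into dipr of basic vectors
  have hPW : 0 ≤ dipr D (p - w) (p - w) := dipr_nonneg hD _
  -- rewrite all dipr of differences into dipr of single vectors
  simp only [dipr_sub_left, dipr_sub_right] at hwu hwp hPW ⊢
  have c1 := dipr_comm hD v w
  have c2 := dipr_comm hD v u
  have c3 := dipr_comm hD v p
  have c4 := dipr_comm hD u w
  have c5 := dipr_comm hD u p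
  have c6 := dipr_comm hD p w
  subst hζ
  nlinarith [mul_le_mul_of_nonneg_left hwu hγ0, mul_le_mul_of_nonneg_left hwp hγ0,
    mul_nonneg hγ0 hPW, hPW, hwu, hwp]
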